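/- arXiv:2503.02715 — 4 statements merged into one kernel-verified Lean document; each statement's English description precedes it below -/
import Mathlib

section
/- Let R₁ and R₂ be two sets of m points each in ℝ² with L∞-metric such that there exists a bijection σ : R₁ → R₂ with d(r, σ(r)) ≤ 2δ for all r ∈ R₁ (i.e., bottleneck distance at most 2δ). Let r₁ ∈ R₁ and r₂ ∈ R₂ be points such that the number of points of R₁ strictly above the horizontal line through r₁ equals the number of points of R₂ strictly above the horizontal line through r₂, and similarly for points strictly below, strictly left, and strictly right. Then d(r₁, r₂) ≤ 2δ. -/
/-- L∞ distance in the plane. -/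
def dinf (p q : ℝ × ℝ) : ℝ := max |p.1 - q.1| |p.2 - q.2|

/-!
Project both sets onto one axis. If `r₂` sat more than `2δ` above `r₁`, the matching would send
every point of `R₁` not strictly above `r₁` to a point of `R₂` strictly below `r₂`. Together with
the points strictly above `r₁`, which are as many as those strictly above `r₂`, this accounts for
all of `R₁` using only points of `R₂ \ {r₂}`, contradicting `#R₁ = #R₂`.
-/

open Finset

section

variable {α β : Type*} [LinearOrder β] {s t : Finset α} {f : α → β} {y : α}

theorem card_filter_lt_add_card_filter_gt_lt_card (hy : y ∈ t) :
    #{z ∈ t | f z < f y} + #{z ∈ t | f y < f z} < #t := by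
  have hssub : {z ∈ t | f y < f z} ⊂ {z ∈ t | ¬ f z < f y} := by
    refine (ssubset_iff_of_subset fun z hz => ?_).2 ⟨y, by simp [hy]⟩
    rw [mem_filter] at hz ⊢
    exact ⟨hz.1, hz.2.not_gt⟩
  have hsplit := card_filter_add_card_filter_not (s := t) (fun z => f z < f y)
  have := card_lt_card hssub
  omega

variable [AddCommGroup β] [IsOrderedAddMonoid β] {σ : α → α} {ε a : β}

theorem sub_le_of_card_filter_gt_eq (hσ : Set.BijOn σ s t)
    (hf : ∀ x ∈ s, f (σ x) - f x ≤ ε) (hy : y ∈ t)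
    (hcount : #{x ∈ s | a < f x} = #{z ∈ t | f y < f z}) :
    f y - a ≤ ε := by
  by_contra! hlt
  have hmaps : ∀ x ∈ {x ∈ s | ¬ a < f x}, σ x ∈ {z ∈ t | f z < f y} := by
    intro x hx
    rw [mem_filter, not_lt] at hx
    refine mem_filter.2 ⟨hσ.mapsTo hx.1, ?_⟩
    calc f (σ x) ≤ ε + f x := sub_le_iff_le_add.1 (hf x hx.1)
      _ ≤ ε + a := by gcongr; exact hx.2
      _ < f y := lt_sub_iff_add_lt.1 hlt
  have hle := card_le_card_of_injOn σ hmaps (hσ.injOn.mono (coe_subset.2 (filter_subset _ _)))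
  have hsplit := card_filter_add_card_filter_not (s := s) (fun x => a < f x)
  have hcard : #s = #t := card_nbij σ (fun x hx => hσ.mapsTo hx) hσ.injOn hσ.surjOn
  have := card_filter_lt_add_card_filter_gt_lt_card (f := f) hy
  omega

theorem abs_sub_le_of_card_filter_eq (hσ : Set.BijOn σ s t)
    (hf : ∀ x ∈ s, |f (σ x) - f x| ≤ ε) (hy : y ∈ t)
    (hlt : #{x ∈ s | f x < a} = #{z ∈ t | f z < f y})
    (hgt : #{x ∈ s | a < f x} = #{z ∈ t | f y < f z}) :
    |f y - a| ≤ ε := by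
  refine abs_sub_le_iff.2
    ⟨sub_le_of_card_filter_gt_eq hσ (fun x hx => (abs_sub_le_iff.1 (hf x hx)).1) hy hgt, ?_⟩
  simpa only [neg_sub_neg] using sub_le_of_card_filter_gt_eq (f := fun x => -f x) (a := -a) hσ
    (fun x hx => by simpa only [neg_sub_neg] using (abs_sub_le_iff.1 (hf x hx)).2) hy
    (by simpa only [neg_lt_neg_iff])

end

theorem same_quadrant_counts_close_general (δ : ℝ)
    (R₁ R₂ : Finset (ℝ × ℝ))
    (σ : ℝ × ℝ → ℝ × ℝ) (hσ : Set.BijOn σ (R₁ : Set (ℝ × ℝ)) (R₂ : Set (ℝ × ℝ)))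
    (hmatch : ∀ r ∈ R₁, dinf r (σ r) ≤ 2 * δ)
    (r₁ : ℝ × ℝ) (r₂ : ℝ × ℝ) (hr₂ : r₂ ∈ R₂)
    (habove : (R₁.filter fun p => p.2 > r₁.2).card = (R₂.filter fun p => p.2 > r₂.2).card)
    (hbelow : (R₁.filter fun p => p.2 < r₁.2).card = (R₂.filter fun p => p.2 < r₂.2).card)
    (hleft : (R₁.filter fun p => p.1 < r₁.1).card = (R₂.filter fun p => p.1 < r₂.1).card)
    (hright : (R₁.filter fun p => p.1 > r₁.1).card = (R₂.filter fun p => p.1 > r₂.1).card) :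
    dinf r₁ r₂ ≤ 2 * δ := by
  have hx : |r₂.1 - r₁.1| ≤ 2 * δ :=
    abs_sub_le_of_card_filter_eq hσ (fun r hr => by
      rw [abs_sub_comm]; exact (le_max_left _ _).trans (hmatch r hr)) hr₂ hleft hright
  have hy : |r₂.2 - r₁.2| ≤ 2 * δ :=
    abs_sub_le_of_card_filter_eq hσ (fun r hr => by
      rw [abs_sub_comm]; exact (le_max_right _ _).trans (hmatch r hr)) hr₂ hbelow habove
  rw [abs_sub_comm] at hx hy
  exact max_le hx hy

/-- If two point sets admit a perfect matching with all matched L∞-distances at most 2δ,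
and two points `r₁ ∈ R₁`, `r₂ ∈ R₂` have equal counts of points of their respective sets
strictly above, strictly below, strictly left and strictly right of them, then
`r₁` and `r₂` are at L∞-distance at most 2δ. -/
theorem same_quadrant_counts_close (δ : ℝ) (hδ : 0 ≤ δ) (m : ℕ)
    (R₁ R₂ : Finset (ℝ × ℝ)) (hR₁ : R₁.card = m) (hR₂ : R₂.card = m)
    (σ : ℝ × ℝ → ℝ × ℝ) (hσ : Set.BijOn σ (R₁ : Set (ℝ × ℝ)) (R₂ : Set (ℝ × ℝ)))
    (hmatch : ∀ r ∈ R₁, dinf r (σ r) ≤ 2 * δ)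
    (r₁ : ℝ × ℝ) (hr₁ : r₁ ∈ R₁) (r₂ : ℝ × ℝ) (hr₂ : r₂ ∈ R₂)
    (habove : (R₁.filter fun p => p.2 > r₁.2).card = (R₂.filter fun p => p.2 > r₂.2).card)
    (hbelow : (R₁.filter fun p => p.2 < r₁.2).card = (R₂.filter fun p => p.2 < r₂.2).card)
    (hleft : (R₁.filter fun p => p.1 < r₁.1).card = (R₂.filter fun p => p.1 < r₂.1).card)
    (hright : (R₁.filter fun p => p.1 > r₁.1).card = (R₂.filter fun p => p.1 > r₂.1).card) :
    dinf r₁ r₂ ≤ 2 * δ :=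
  same_quadrant_counts_close_general δ R₁ R₂ σ hσ hmatch r₁ r₂ hr₂ habove hbelow hleft hright
end

section
/- Let p₁, ..., p₆ be six points arranged so that the closed L∞-balls of radius δ around pᵢ and pⱼ intersect if and only if i and j are adjacent in the 6-cycle (indices mod 6). Consider three chains each consisting of two antipodal points: A = {p₁, p₄}, B = {p₂, p₅}, C = {p₃, p₆}. Then any two of the chains A, B, C can be δ-satisfied by a single 2-point supermarket chain, but A, B, C cannot all be δ-satisfied by a single 2-point supermarket chain. -/
/-- A 2-point supermarket chain `(s₁, s₂)` δ-satisfies the 2-point chain `(a, b)`. -/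
def Sat2 (δ : ℝ) (s₁ s₂ a b : ℝ × ℝ) : Prop :=
  (dinf s₁ a ≤ δ ∧ dinf s₂ b ≤ δ) ∨ (dinf s₁ b ≤ δ ∧ dinf s₂ a ≤ δ)

open SimpleGraph

theorem cycleGraph_six_adj_iff {i j : Fin 6} :
    (cycleGraph 6).Adj i j ↔ (i.val + 1) % 6 = j.val ∨ (j.val + 1) % 6 = i.val := by
  revert i j; decide

theorem cycleGraph_six_cliqueFree_three : (cycleGraph 6).CliqueFree 3 :=
  ((cycleGraph.bicoloring_of_even 6 (by decide)).colorable).cliqueFree (by simp)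

theorem not_three_near_of_cliqueFree {ι X : Type*} [DecidableEq ι] {G : SimpleGraph ι}
    {near : X → ι → Prop} (hG : G.CliqueFree 3)
    (hadj : ∀ i j, i ≠ j → (∃ q, near q i ∧ near q j) → G.Adj i j) (s : X) {i j k : ι}
    (hij : i ≠ j) (hik : i ≠ k) (hjk : j ≠ k) (hi : near s i) (hj : near s j) (hk : near s k) :
    False :=
  hG {i, j, k} <| is3Clique_triple_iff.2
    ⟨hadj i j hij ⟨s, hi, hj⟩, hadj i k hik ⟨s, hi, hk⟩, hadj j k hjk ⟨s, hj, hk⟩⟩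

namespace Sat2

variable {δ : ℝ} {s₁ s₂ a b : ℝ × ℝ}

theorem swap (h : Sat2 δ s₁ s₂ a b) : Sat2 δ s₁ s₂ b a := h.symm

theorem first_near (h : Sat2 δ s₁ s₂ a b) : dinf s₁ a ≤ δ ∨ dinf s₁ b ≤ δ :=
  h.imp And.left And.left

end Sat2

theorem exists_sat2_of_meet {δ : ℝ} {a a' b b' : ℝ × ℝ}
    (hab : ∃ q, dinf q a ≤ δ ∧ dinf q b ≤ δ) (ha'b' : ∃ q, dinf q a' ≤ δ ∧ dinf q b' ≤ δ) :
    ∃ s₁ s₂, Sat2 δ s₁ s₂ a a' ∧ Sat2 δ s₁ s₂ b b' :=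
  let ⟨q, hqa, hqb⟩ := hab
  let ⟨q', hqa', hqb'⟩ := ha'b'
  ⟨q, q', Or.inl ⟨hqa, hqa'⟩, Or.inl ⟨hqb, hqb'⟩⟩

theorem city_three_chains_general (δ : ℝ) (p : Fin 6 → ℝ × ℝ)
    (hadj : ∀ i j : Fin 6, i ≠ j →
      ((∃ q : ℝ × ℝ, dinf q (p i) ≤ δ ∧ dinf q (p j) ≤ δ) ↔
        ((i.val + 1) % 6 = j.val ∨ (j.val + 1) % 6 = i.val))) :
    (∃ s₁ s₂ : ℝ × ℝ, Sat2 δ s₁ s₂ (p 0) (p 3) ∧ Sat2 δ s₁ s₂ (p 1) (p 4)) ∧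
    (∃ s₁ s₂ : ℝ × ℝ, Sat2 δ s₁ s₂ (p 1) (p 4) ∧ Sat2 δ s₁ s₂ (p 2) (p 5)) ∧
    (∃ s₁ s₂ : ℝ × ℝ, Sat2 δ s₁ s₂ (p 0) (p 3) ∧ Sat2 δ s₁ s₂ (p 2) (p 5)) ∧
    ¬ ∃ s₁ s₂ : ℝ × ℝ, Sat2 δ s₁ s₂ (p 0) (p 3) ∧ Sat2 δ s₁ s₂ (p 1) (p 4) ∧
        Sat2 δ s₁ s₂ (p 2) (p 5) := by
  have hmeet : ∀ i j, i ≠ j →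
      ((∃ q, dinf q (p i) ≤ δ ∧ dinf q (p j) ≤ δ) ↔ (cycleGraph 6).Adj i j) :=
    fun i j hij => (hadj i j hij).trans cycleGraph_six_adj_iff.symm
  have meet : ∀ i j, (cycleGraph 6).Adj i j → ∃ q, dinf q (p i) ≤ δ ∧ dinf q (p j) ≤ δ :=
    fun i j h => (hmeet i j h.ne).2 h
  refine ⟨exists_sat2_of_meet (meet 0 1 (by decide)) (meet 3 4 (by decide)),
    exists_sat2_of_meet (meet 1 2 (by decide)) (meet 4 5 (by decide)), ?_, ?_⟩
  · obtain ⟨s₁, s₂, hA, hC⟩ := exists_sat2_of_meet (meet 0 5 (by decide)) (meet 3 2 (by decide))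
    exact ⟨s₁, s₂, hA, hC.swap⟩
  · rintro ⟨s₁, s₂, hA, hB, hC⟩
    rcases hA.first_near with hi | hi <;> rcases hB.first_near with hj | hj <;>
      rcases hC.first_near with hk | hk <;>
      exact not_three_near_of_cliqueFree cycleGraph_six_cliqueFree_three
        (fun i j hij => (hmeet i j hij).1) s₁
        (by decide) (by decide) (by decide) hi hj hk

/-- Six points whose δ-balls intersect exactly for neighbors on a 6-cycle, grouped into
three chains of antipodal pairs `(p 0, p 3)`, `(p 1, p 4)`, `(p 2, p 5)`: any two of the
chains can be δ-satisfied by one 2-point supermarket chain, but not all three. -/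
theorem city_three_chains (δ : ℝ) (hδ : 0 < δ) (p : Fin 6 → ℝ × ℝ)
    (hadj : ∀ i j : Fin 6, i ≠ j →
      ((∃ q : ℝ × ℝ, dinf q (p i) ≤ δ ∧ dinf q (p j) ≤ δ) ↔
        ((i.val + 1) % 6 = j.val ∨ (j.val + 1) % 6 = i.val))) :
    (∃ s₁ s₂ : ℝ × ℝ, Sat2 δ s₁ s₂ (p 0) (p 3) ∧ Sat2 δ s₁ s₂ (p 1) (p 4)) ∧
    (∃ s₁ s₂ : ℝ × ℝ, Sat2 δ s₁ s₂ (p 1) (p 4) ∧ Sat2 δ s₁ s₂ (p 2) (p 5)) ∧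
    (∃ s₁ s₂ : ℝ × ℝ, Sat2 δ s₁ s₂ (p 0) (p 3) ∧ Sat2 δ s₁ s₂ (p 2) (p 5)) ∧
    ¬ ∃ s₁ s₂ : ℝ × ℝ, Sat2 δ s₁ s₂ (p 0) (p 3) ∧ Sat2 δ s₁ s₂ (p 1) (p 4) ∧
        Sat2 δ s₁ s₂ (p 2) (p 5) :=
  city_three_chains_general δ p hadj
end

section
/- Let n restaurant chains each with m stores in ℝ² be given, and define the restaurant graph G: vertices are all nm stores, and two stores from different chains are adjacent iff their closed L∞-balls of radius δ intersect. Then all n chains can be δ-satisfied by a single supermarket chain of m points if and only if the vertex set of G can be partitioned into m cliques, each containing exactly one store from each chain. -/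
lemma dinf_tri (a b c : ℝ × ℝ) : dinf a b ≤ dinf c a + dinf c b := by
  unfold dinf
  apply max_le
  · have h : a.1 - b.1 = (a.1 - c.1) + (c.1 - b.1) := by ring
    calc |a.1 - b.1| ≤ |a.1 - c.1| + |c.1 - b.1| := by rw [h]; exact abs_add_le _ _
      _ = |c.1 - a.1| + |c.1 - b.1| := by rw [abs_sub_comm]
      _ ≤ _ := add_le_add (le_max_left _ _) (le_max_left _ _)
  · have h : a.2 - b.2 = (a.2 - c.2) + (c.2 - b.2) := by ring
    calc |a.2 - b.2| ≤ |a.2 - c.2| + |c.2 - b.2| := by rw [h]; exact abs_add_le _ _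
      _ = |c.2 - a.2| + |c.2 - b.2| := by rw [abs_sub_comm]
      _ ≤ _ := add_le_add (le_max_right _ _) (le_max_right _ _)

/-- Restaurant graph lemma: all n chains (m stores each) can be δ-satisfied by a single
supermarket chain iff the stores can be partitioned into m colorful cliques of the
restaurant graph (stores of different chains adjacent iff their δ-balls intersect,
i.e. iff their L∞-distance is at most 2δ). -/
theorem single_chain_iff_colorful_clique_partition (n m : ℕ) (δ : ℝ) (hδ : 0 ≤ δ)
    (R : Fin n → Fin m → ℝ × ℝ) :
    (∃ s : Fin m → ℝ × ℝ, ∀ i : Fin n, ∃ π : Equiv.Perm (Fin m),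
        ∀ k, dinf (s k) (R i (π k)) ≤ δ) ↔
    (∃ part : Fin n × Fin m → Fin m,
        (∀ i : Fin n, Function.Bijective fun a => part (i, a)) ∧
        (∀ v w : Fin n × Fin m, v.1 ≠ w.1 → part v = part w →
          dinf (R v.1 v.2) (R w.1 w.2) ≤ 2 * δ)) := by
  constructor
  · rintro ⟨s, hs⟩
    choose π hπ using hs
    refine ⟨fun v => (π v.1).symm v.2, fun i => (π i).symm.bijective, ?_⟩
    rintro ⟨i, a⟩ ⟨j, b⟩ hij hpart
    simp only at hpart hij
    have ha := hπ i ((π i).symm a)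
    have hb := hπ j ((π j).symm b)
    rw [Equiv.apply_symm_apply] at ha hb
    rw [hpart] at ha
    have := dinf_tri (R i a) (R j b) (s ((π j).symm b))
    simp only
    linarith
  · rintro ⟨part, hbij, hadj⟩
    rcases Nat.eq_zero_or_pos n with hn | hn
    · subst hn
      exact ⟨fun _ => (0, 0), fun i => i.elim0⟩
    · haveI : Nonempty (Fin n) := ⟨⟨0, hn⟩⟩
      set σ : Fin n → Equiv.Perm (Fin m) := fun i => Equiv.ofBijective _ (hbij i) with hσ
      have hσap : ∀ i a, part (i, a) = σ i a := fun i a => rfl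
      set pt : Fin n → Fin m → ℝ × ℝ := fun i k => R i ((σ i).symm k) with hpt
      have hpartk : ∀ i k, part (i, (σ i).symm k) = k := fun i k => by
        rw [hσap]; exact (σ i).apply_symm_apply k
      have key : ∀ i j k, i ≠ j → dinf (pt i k) (pt j k) ≤ 2 * δ := by
        intro i j k hij
        exact hadj (i, (σ i).symm k) (j, (σ j).symm k) hij
          (by rw [hpartk, hpartk])
      set A : Fin m → ℝ := fun k =>
        Finset.univ.sup' Finset.univ_nonempty (fun i => (pt i k).1) with hA
      set B : Fin m → ℝ := fun k =>
        Finset.univ.sup' Finset.univ_nonempty (fun i => (pt i k).2) with hB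
      refine ⟨fun k => (A k - δ, B k - δ), fun i => ⟨(σ i).symm, fun k => ?_⟩⟩
      have h1 : (pt i k).1 ≤ A k := Finset.le_sup' (fun i => (pt i k).1) (Finset.mem_univ i)
      have h2 : (pt i k).2 ≤ B k := Finset.le_sup' (fun i => (pt i k).2) (Finset.mem_univ i)
      have h3 : A k ≤ (pt i k).1 + 2 * δ := by
        apply Finset.sup'_le
        intro j _
        by_cases hji : j = i
        · subst hji; linarith
        · have hk := key j i k hji
          unfold dinf at hk
          have := abs_le.mp (le_trans (le_max_left _ _) hk)
          linarith [this.1, this.2]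
      have h4 : B k ≤ (pt i k).2 + 2 * δ := by
        apply Finset.sup'_le
        intro j _
        by_cases hji : j = i
        · subst hji; linarith
        · have hk := key j i k hji
          unfold dinf at hk
          have := abs_le.mp (le_trans (le_max_right _ _) hk)
          linarith [this.1, this.2]
      show dinf (A k - δ, B k - δ) (pt i k) ≤ δ
      unfold dinf
      apply max_le
      · rw [abs_le]; constructor <;> simp only <;> linarith
      · rw [abs_le]; constructor <;> simp only <;> linarith
end

section
/- Let G be a graph whose vertex set is partitioned into n pairs (color classes) P₁, ..., Pₙ, with edges only between different pairs. Suppose pairs A = {a₁,a₂} and B = {b₁,b₂} admit a unique perfect matching in G, say a₁b₁, a₂b₂. Form G' by replacing A and B with a new pair C = {c₁, c₂}, where a vertex v ∉ A ∪ B is adjacent to cᵢ iff v is adjacent to both aᵢ and bᵢ in G. Then the vertex set of G can be partitioned into two cliques each containing exactly one vertex per pair if and only if the vertex set of G' can be so partitioned. -/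
/-!
A colorful partition into two cliques is a 2-colouring `f` of the vertices that is injective on
every pair and makes each colour class a clique. Restricted to the pairs `A` and `B`, such an `f`
matches `A` to `B` along equal colours, and this matching lies in `G`; since `(A, k)–(B, k)` is the
only perfect matching between them, `f (A, k) = f (B, k)`. Hence `f` descends to `G'`, giving the
contracted vertex `(A, k)` the common colour of `(A, k)` and `(B, k)`. Conversely, a partition of
`G'` lifts to `G` by colouring `(B, k)` like `(A, k)`, the edges `(A, k)–(B, k)` being present.
-/

/-- `f v` is the clique containing `v`. -/
def IsColorfulCliquePartition {κ : Type*} (H : SimpleGraph (κ × Fin 2)) (f : κ × Fin 2 → Fin 2) :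
    Prop :=
  (∀ (i : κ) (a b : Fin 2), a ≠ b → f (i, a) ≠ f (i, b)) ∧
    ∀ v w : κ × Fin 2, v.1 ≠ w.1 → f v = f w → H.Adj v w

theorem Fin.two_eq_and_eq_or_eq_and_eq {a₀ a₁ b₀ b₁ : Fin 2} (ha : a₀ ≠ a₁) (hb : b₀ ≠ b₁) :
    a₀ = b₀ ∧ a₁ = b₁ ∨ a₀ = b₁ ∧ a₁ = b₀ := by
  revert a₀ a₁ b₀ b₁; decide

namespace IsColorfulCliquePartition

variable {κ : Type*} {H : SimpleGraph (κ × Fin 2)} {f : κ × Fin 2 → Fin 2}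

theorem eq_of_apply_eq (hf : IsColorfulCliquePartition H f) {i : κ} {a b : Fin 2}
    (h : f (i, a) = f (i, b)) : a = b :=
  not_not.1 fun hab => hf.1 i a b hab h

theorem apply_eq_apply_of_not_crossAdj (hf : IsColorfulCliquePartition H f) {A B : κ}
    (hAB : A ≠ B) (hcross : ¬ (H.Adj (A, 0) (B, 1) ∧ H.Adj (A, 1) (B, 0))) (k : Fin 2) :
    f (A, k) = f (B, k) := by
  rcases Fin.two_eq_and_eq_or_eq_and_eq (hf.1 A 0 1 zero_ne_one) (hf.1 B 0 1 zero_ne_one) with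
    ⟨h₀, h₁⟩ | ⟨h₀, h₁⟩
  · fin_cases k
    exacts [h₀, h₁]
  · exact absurd ⟨hf.2 _ _ hAB h₀, hf.2 _ _ hAB h₁⟩ hcross

end IsColorfulCliquePartition

section Contraction

variable {ι : Type*} {A B : ι}

def mergeIndex [DecidableEq ι] (hAB : A ≠ B) (i : ι) : {i : ι // i ≠ B} :=
  if h : i = B then ⟨A, hAB⟩ else ⟨i, h⟩

theorem eq_and_eq_or_eq_and_eq_of_mergeIndex_eq [DecidableEq ι] {hAB : A ≠ B} {i j : ι}
    (h : mergeIndex hAB i = mergeIndex hAB j) (hij : i ≠ j) :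
    i = A ∧ j = B ∨ i = B ∧ j = A := by
  unfold mergeIndex at h
  split_ifs at h with hi hj hj <;> simp_all

variable {G : SimpleGraph (ι × Fin 2)} {G' : SimpleGraph ({i : ι // i ≠ B} × Fin 2)}
  (hG' : ∀ v w : {i : ι // i ≠ B} × Fin 2, G'.Adj v w ↔
      ((v.1.val ≠ A ∧ w.1.val ≠ A ∧ G.Adj (v.1.val, v.2) (w.1.val, w.2)) ∨
       (v.1.val ≠ A ∧ w.1.val = A ∧
          G.Adj (v.1.val, v.2) (A, w.2) ∧ G.Adj (v.1.val, v.2) (B, w.2)) ∨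
       (v.1.val = A ∧ w.1.val ≠ A ∧
          G.Adj (w.1.val, w.2) (A, v.2) ∧ G.Adj (w.1.val, w.2) (B, v.2))))
include hG'

theorem adj_of_adj_mergeIndex [DecidableEq ι] (hAB : A ≠ B) {i j : ι} {a b : Fin 2}
    (h : G'.Adj (mergeIndex hAB i, a) (mergeIndex hAB j, b)) : G.Adj (i, a) (j, b) := by
  rw [hG'] at h
  clear hG'
  unfold mergeIndex at h
  split_ifs at h with hi hj hj <;>
    rcases h with ⟨hiA, hjA, h⟩ | ⟨hiA, hjA, h, h'⟩ | ⟨hiA, hjA, h, h'⟩ <;> simp_all [G.adj_comm]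

theorem IsColorfulCliquePartition.comp_val {f : ι × Fin 2 → Fin 2}
    (hf : IsColorfulCliquePartition G f) (hAB : A ≠ B)
    (hcross : ¬ (G.Adj (A, 0) (B, 1) ∧ G.Adj (A, 1) (B, 0))) :
    IsColorfulCliquePartition G' fun v => f (v.1.val, v.2) := by
  refine ⟨fun i => hf.1 i.val, ?_⟩
  rintro ⟨⟨i, hiB⟩, a⟩ ⟨⟨j, hjB⟩, b⟩ hij hab
  replace hij : i ≠ j := fun h => hij (Subtype.ext h)
  dsimp only at hab
  have hmatch := hf.apply_eq_apply_of_not_crossAdj hAB hcross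
  rw [hG']
  by_cases hiA : i = A <;> by_cases hjA : j = A
  · exact absurd (hiA.trans hjA.symm) hij
  · subst hiA
    exact .inr <| .inr ⟨rfl, hjA, hf.2 _ _ hjA hab.symm, hf.2 _ _ hjB (hab.symm.trans (hmatch a))⟩
  · subst hjA
    exact .inr <| .inl ⟨hiA, rfl, hf.2 _ _ hiA hab, hf.2 _ _ hiB (hab.trans (hmatch b))⟩
  · exact .inl ⟨hiA, hjA, hf.2 _ _ hij hab⟩

theorem IsColorfulCliquePartition.comp_mergeIndex [DecidableEq ι]
    {g : {i : ι // i ≠ B} × Fin 2 → Fin 2} (hg : IsColorfulCliquePartition G' g) (hAB : A ≠ B)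
    (hmatch : ∀ k : Fin 2, G.Adj (A, k) (B, k)) :
    IsColorfulCliquePartition G fun v => g (mergeIndex hAB v.1, v.2) := by
  refine ⟨fun i => hg.1 (mergeIndex hAB i), ?_⟩
  rintro ⟨i, a⟩ ⟨j, b⟩ hij hab
  by_cases hmerge : mergeIndex hAB i = mergeIndex hAB j
  · dsimp only at hij hab
    rw [hmerge] at hab
    obtain rfl := hg.eq_of_apply_eq hab
    rcases eq_and_eq_or_eq_and_eq_of_mergeIndex_eq hmerge hij with ⟨rfl, rfl⟩ | ⟨rfl, rfl⟩
    exacts [hmatch a, (hmatch a).symm]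
  · exact adj_of_adj_mergeIndex hG' hAB (hg.2 _ _ hmerge hab)

end Contraction

theorem contraction_correct_general (ι : Type*)
    (G : SimpleGraph (ι × Fin 2))
    (A B : ι) (hAB : A ≠ B)
    (hm1 : ∀ k : Fin 2, G.Adj (A, k) (B, k))
    (hm2 : ¬ (G.Adj (A, 0) (B, 1) ∧ G.Adj (A, 1) (B, 0)))
    (G' : SimpleGraph ({i : ι // i ≠ B} × Fin 2))
    (hG' : ∀ v w : {i : ι // i ≠ B} × Fin 2, G'.Adj v w ↔
      ((v.1.val ≠ A ∧ w.1.val ≠ A ∧ G.Adj (v.1.val, v.2) (w.1.val, w.2)) ∨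
       (v.1.val ≠ A ∧ w.1.val = A ∧
          G.Adj (v.1.val, v.2) (A, w.2) ∧ G.Adj (v.1.val, v.2) (B, w.2)) ∨
       (v.1.val = A ∧ w.1.val ≠ A ∧
          G.Adj (w.1.val, w.2) (A, v.2) ∧ G.Adj (w.1.val, w.2) (B, v.2)))) :
    (∃ f : ι × Fin 2 → Fin 2,
        (∀ (i : ι) (a b : Fin 2), a ≠ b → f (i, a) ≠ f (i, b)) ∧
        (∀ v w : ι × Fin 2, v.1 ≠ w.1 → f v = f w → G.Adj v w)) ↔
    (∃ g : {i : ι // i ≠ B} × Fin 2 → Fin 2,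
        (∀ (i : {i : ι // i ≠ B}) (a b : Fin 2), a ≠ b → g (i, a) ≠ g (i, b)) ∧
        (∀ v w : {i : ι // i ≠ B} × Fin 2, v.1 ≠ w.1 → g v = g w → G'.Adj v w)) := by
  classical
  show (∃ f, IsColorfulCliquePartition G f) ↔ ∃ g, IsColorfulCliquePartition G' g
  exact ⟨fun ⟨f, hf⟩ => ⟨_, hf.comp_val hG' hAB hm2⟩,
    fun ⟨g, hg⟩ => ⟨_, hg.comp_mergeIndex hG' hAB hm1⟩⟩

/-- Correctness of the contraction step: if the pairs A and B have the unique perfect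
matching `(A,k)–(B,k)`, and G' is obtained by replacing A and B by a contracted pair C
(placed at index A, with B removed), then G has a partition into two colorful cliques
iff G' does. -/
theorem contraction_correct (ι : Type*) [DecidableEq ι]
    (G : SimpleGraph (ι × Fin 2))
    (hno : ∀ (i : ι) (a b : Fin 2), ¬ G.Adj (i, a) (i, b))
    (A B : ι) (hAB : A ≠ B)
    (hm1 : ∀ k : Fin 2, G.Adj (A, k) (B, k))
    (hm2 : ¬ (G.Adj (A, 0) (B, 1) ∧ G.Adj (A, 1) (B, 0)))
    (G' : SimpleGraph ({i : ι // i ≠ B} × Fin 2))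
    (hG' : ∀ v w : {i : ι // i ≠ B} × Fin 2, G'.Adj v w ↔
      ((v.1.val ≠ A ∧ w.1.val ≠ A ∧ G.Adj (v.1.val, v.2) (w.1.val, w.2)) ∨
       (v.1.val ≠ A ∧ w.1.val = A ∧
          G.Adj (v.1.val, v.2) (A, w.2) ∧ G.Adj (v.1.val, v.2) (B, w.2)) ∨
       (v.1.val = A ∧ w.1.val ≠ A ∧
          G.Adj (w.1.val, w.2) (A, v.2) ∧ G.Adj (w.1.val, w.2) (B, v.2)))) :
    (∃ f : ι × Fin 2 → Fin 2,
        (∀ (i : ι) (a b : Fin 2), a ≠ b → f (i, a) ≠ f (i, b)) ∧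
        (∀ v w : ι × Fin 2, v.1 ≠ w.1 → f v = f w → G.Adj v w)) ↔
    (∃ g : {i : ι // i ≠ B} × Fin 2 → Fin 2,
        (∀ (i : {i : ι // i ≠ B}) (a b : Fin 2), a ≠ b → g (i, a) ≠ g (i, b)) ∧
        (∀ v w : {i : ι // i ≠ B} × Fin 2, v.1 ≠ w.1 → g v = g w → G'.Adj v w)) :=
  contraction_correct_general ι G A B hAB hm1 hm2 G' hG'
end
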